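/- arXiv:1901.04270 — 5 statements merged into one kernel-verified Lean document; each statement's English description precedes it below -/
import Mathlib

section
/- For every integer g ≥ 1, the maximum M of G(t) = ∏_{k=1}^g (t - k²) over the interval 0 ≤ t ≤ g²+1 satisfies M ≥ (2g-1)!/g. -/
/-!
Evaluate `G` at the right endpoint `t = g² + 1`. The factor `k = g` equals `1`, and every other
factor is at least `g² - k² = (g - k)(g + k)`; over `1 ≤ k < g` these multiply to
`(g - 1)! · (2g - 1)! / g! = (2g - 1)! / g`.
-/

open Finset Nat

theorem prod_Icc_sq_sub_sq_eq_prod_descFactorial (n : ℕ) :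
    ∏ k ∈ Icc 1 n, ((n + 1) ^ 2 - k ^ 2) = n.descFactorial n * (n + 2).ascFactorial n := by
  rw [descFactorial_eq_prod_range, ascFactorial_eq_prod_range, ← prod_mul_distrib,
    ← Ico_add_one_right_eq_Icc, prod_Ico_eq_prod_range, Nat.add_sub_cancel]
  refine prod_congr rfl fun i hi => ?_
  have hi : i < n := mem_range.mp hi
  rw [Nat.sq_sub_sq, mul_comm]
  congr 1 <;> omega

theorem factorial_two_mul_add_one_eq_mul_prod_sq_sub_sq (n : ℕ) :
    (2 * n + 1)! = (n + 1) * ∏ k ∈ Icc 1 n, ((n + 1) ^ 2 - k ^ 2) := by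
  rw [prod_Icc_sq_sub_sq_eq_prod_descFactorial, descFactorial_self, ← mul_assoc,
    ← factorial_succ, factorial_mul_ascFactorial]
  ring_nf

theorem cast_prod_sq_sub_sq_le_prod_sq_add_one_sub_sq (n : ℕ) :
    ((∏ k ∈ Icc 1 n, ((n + 1) ^ 2 - k ^ 2) : ℕ) : ℝ) ≤
      ∏ k ∈ Icc 1 (n + 1), (((n + 1 : ℕ) : ℝ) ^ 2 + 1 - (k : ℝ) ^ 2) := by
  rw [prod_Icc_succ_top (by omega), add_sub_cancel_left, Nat.cast_prod, mul_one]
  refine prod_le_prod (fun k _ => by positivity) fun k hk => ?_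
  have hkn : k ≤ n := (mem_Icc.mp hk).2
  rw [Nat.cast_sub (by gcongr; omega)]
  push_cast
  linarith

theorem stmt_0 (g : ℕ) (hg : 1 ≤ g)
    (G : ℝ → ℝ) (hG : ∀ t, G t = ∏ k ∈ Finset.Icc 1 g, (t - (k : ℝ)^2))
    (M : ℝ) (hM : IsGreatest (G '' Set.Icc (0 : ℝ) ((g : ℝ)^2 + 1)) M) :
    M ≥ (Nat.factorial (2 * g - 1) : ℝ) / g := by
  obtain ⟨n, rfl⟩ : ∃ n, g = n + 1 := ⟨g - 1, by omega⟩
  have hGM : G (((n + 1 : ℕ) : ℝ) ^ 2 + 1) ≤ M :=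
    hM.2 (Set.mem_image_of_mem G ⟨by positivity, le_rfl⟩)
  rw [show 2 * (n + 1) - 1 = 2 * n + 1 by omega, factorial_two_mul_add_one_eq_mul_prod_sq_sub_sq,
    ge_iff_le, div_le_iff₀ (by positivity), Nat.cast_mul]
  calc ((n + 1 : ℕ) : ℝ) * ((∏ k ∈ Icc 1 n, ((n + 1) ^ 2 - k ^ 2) : ℕ) : ℝ)
      ≤ ((n + 1 : ℕ) : ℝ) * G (((n + 1 : ℕ) : ℝ) ^ 2 + 1) := by
        rw [hG]; gcongr; exact cast_prod_sq_sub_sq_le_prod_sq_add_one_sub_sq n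
    _ ≤ ((n + 1 : ℕ) : ℝ) * M := by gcongr
    _ = M * ((n + 1 : ℕ) : ℝ) := mul_comm _ _
end

section
/- For each integer k with 1 ≤ k ≤ g, the derivative of p satisfies p'(k) = (-1)^{g-k} · α·(g+k)!·(g-k)!/k. -/
/-!
At a root `k` of one factor, the product rule leaves a single term:
`p'(k) = 2kα ∏_{j ≠ k} (k - j)(k + j)`. The factors `k - j` give `(-1)^(g-k) (k-1)! (g-k)!`,
and together with `2k = k + k` the factors `k + j` give `(g+k)! / k!`.
-/

open Finset
open scoped Nat

theorem HasDerivAt.fun_finsetProd_of_eq_zero {𝕜 : Type*} [NontriviallyNormedField 𝕜]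
    {ι : Type*} [DecidableEq ι] {𝔸 : Type*} [NormedCommRing 𝔸] [NormedAlgebra 𝕜 𝔸]
    {u : Finset ι} {f : ι → 𝕜 → 𝔸} {f' : ι → 𝔸} {x : 𝕜}
    (hf : ∀ i ∈ u, HasDerivAt (f i) (f' i) x) {k : ι} (hk : k ∈ u) (hfk : f k x = 0) :
    HasDerivAt (∏ i ∈ u, f i ·) ((∏ j ∈ u.erase k, f j x) • f' k) x := by
  convert HasDerivAt.fun_finsetProd hf using 1
  rw [sum_eq_single_of_mem k hk fun i _ hik ↦ ?_]
  rw [prod_eq_zero (mem_erase.2 ⟨Ne.symm hik, hk⟩) hfk, zero_smul]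

section
variable {R : Type*}

theorem prod_Icc_one_natCast_add_mul_factorial [CommSemiring R] (k g : ℕ) :
    (∏ j ∈ Icc 1 g, ((k : R) + j)) * k ! = (k + g)! := by
  induction g with
  | zero => simp
  | succ g ih =>
    rw [prod_Icc_succ_top (by omega), mul_right_comm, ih, ← add_assoc, Nat.factorial_succ]
    push_cast
    ring

variable [CommRing R]

theorem prod_Ioc_natCast_sub (a n : ℕ) : ∏ j ∈ Ioc a (a + n), ((j : R) - a) = n ! := by
  induction n with
  | zero => simp
  | succ n ih =>
    rw [← add_assoc, prod_Ioc_succ_top (by omega), ih, Nat.factorial_succ]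
    push_cast
    ring

theorem prod_Ico_one_natCast_sub (k : ℕ) : ∏ j ∈ Ico 1 k, ((k : R) - j) = (k - 1)! := by
  rcases k.eq_zero_or_pos with rfl | hk
  · simp
  have hcast : ∏ j ∈ Ico 1 k, ((k : R) - j) = ((∏ j ∈ Ico 1 k, (k - j) : ℕ) : R) := by
    push_cast
    exact prod_congr rfl fun j hj ↦ by rw [Nat.cast_sub (mem_Ico.1 hj).2.le]
  have hreflect := prod_Ico_reflect (fun i ↦ i) 1 (m := k) (n := k) (by omega)
  rw [hcast, hreflect, Nat.add_sub_cancel_left, Nat.add_sub_cancel, ← prod_Ico_id_eq_factorial,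
    Nat.sub_add_cancel hk]

theorem prod_Icc_erase_natCast_sub {k g : ℕ} (hk : k ∈ Icc 1 g) :
    ∏ j ∈ (Icc 1 g).erase k, ((k : R) - j) = (-1) ^ (g - k) * ((k - 1)! * (g - k)!) := by
  obtain ⟨hk1, hkg⟩ := mem_Icc.1 hk
  have hsplit : (Icc 1 g).erase k = Ico 1 k ∪ Ioc k g := by
    ext j
    simp only [mem_erase, mem_Icc, mem_union, mem_Ico, mem_Ioc]
    omega
  have hdisj : Disjoint (Ico 1 k) (Ioc k g) :=
    disjoint_left.2 fun j hj hj' ↦ by simp only [mem_Ico, mem_Ioc] at hj hj'; omega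
  have hright : ∏ j ∈ Ioc k g, ((k : R) - j) = (-1) ^ (g - k) * (g - k)! := by
    simp_rw [← neg_sub _ (k : R)]
    rw [prod_neg, Nat.card_Ioc, ← prod_Ioc_natCast_sub k (g - k), Nat.add_sub_cancel' hkg]
  rw [hsplit, prod_union hdisj, prod_Ico_one_natCast_sub, hright]
  ring

theorem natCast_mul_prod_Icc_erase_sq_sub_sq {k g : ℕ} (hk : k ∈ Icc 1 g) :
    (k : R) * (2 * k * ∏ j ∈ (Icc 1 g).erase k, ((k : R) ^ 2 - j ^ 2))
      = (-1) ^ (g - k) * ((g + k)! * (g - k)!) := by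
  have hfact : (k : R) * (k - 1)! = k ! := by
    rw [← Nat.cast_mul, Nat.mul_factorial_pred (Nat.one_le_iff_ne_zero.1 (mem_Icc.1 hk).1)]
  have hsum : 2 * k * ∏ j ∈ (Icc 1 g).erase k, ((k : R) + j) = ∏ j ∈ Icc 1 g, ((k : R) + j) := by
    rw [← mul_prod_erase _ _ hk, two_mul]
  simp_rw [_root_.sq_sub_sq, prod_mul_distrib, prod_Icc_erase_natCast_sub hk]
  rw [add_comm g k, ← prod_Icc_one_natCast_add_mul_factorial, ← hsum, ← hfact]
  ring

end

theorem stmt_4_general (g : ℕ) (α c : ℝ)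
    (p : ℝ → ℝ)
    (hp : ∀ x, p x = α * ∏ k ∈ Finset.Icc 1 g, (x^2 - (k : ℝ)^2) - Real.sqrt c)
    (k : ℕ) (hk1 : 1 ≤ k) (hkg : k ≤ g) :
    deriv p (k : ℝ)
      = (-1 : ℝ)^(g - k) * (α * (Nat.factorial (g + k)) * (Nat.factorial (g - k)) / k) := by
  have hk : k ∈ Icc 1 g := mem_Icc.2 ⟨hk1, hkg⟩
  have hprod : HasDerivAt (fun x ↦ ∏ j ∈ Icc 1 g, (x ^ 2 - (j : ℝ) ^ 2))
      ((∏ j ∈ (Icc 1 g).erase k, ((k : ℝ) ^ 2 - j ^ 2)) • (2 * (k : ℝ))) k :=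
    HasDerivAt.fun_finsetProd_of_eq_zero (f := fun (j : ℕ) x ↦ x ^ 2 - (j : ℝ) ^ 2)
      (fun j _ ↦ by simpa using (hasDerivAt_pow 2 (k : ℝ)).sub_const ((j : ℝ) ^ 2)) hk (sub_self _)
  have hp' : p = fun x ↦ α * ∏ j ∈ Icc 1 g, (x ^ 2 - (j : ℝ) ^ 2) - √c := funext hp
  rw [hp', ((hprod.const_mul α).sub_const √c).deriv, smul_eq_mul]
  have hk0 : (k : ℝ) ≠ 0 := Nat.cast_ne_zero.2 (by omega)
  rw [mul_div_assoc', eq_div_iff hk0]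
  linear_combination α * natCast_mul_prod_Icc_erase_sq_sub_sq (R := ℝ) hk

theorem stmt_4 (g : ℕ) (hg : 1 ≤ g) (α c : ℝ) (hα : 0 < α) (hc : 0 < c)
    (p : ℝ → ℝ)
    (hp : ∀ x, p x = α * ∏ k ∈ Finset.Icc 1 g, (x^2 - (k : ℝ)^2) - Real.sqrt c)
    (k : ℕ) (hk1 : 1 ≤ k) (hkg : k ≤ g) :
    deriv p (k : ℝ)
      = (-1 : ℝ)^(g - k) * (α * (Nat.factorial (g + k)) * (Nat.factorial (g - k)) / k) :=
  stmt_4_general g α c p hp k hk1 hkg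
end

section
/- Let x̂ ∈ ℝ satisfy 2p(x̂) + x̂·p'(x̂) − 4x̂²/ℏ² = 0 and 2x̂² − ℏ²p(x̂) > 0, and set z = (1/ℏ)e^{iθ}√(2x̂² − ℏ²p(x̂)) for some θ ∈ ℝ. Then X = [[x̂,0],[0,−x̂]], Y = [[0,z],[z̄,0]], Z = (1/(iℏ))[X,Y] satisfy [X,Y] = iℏZ, [[X,Y],Y] = ℏ²(p(X)p'(X) + T(X,Y²)), and [[Y,X],X] = ℏ²(2Y³ + Yp(X) + p(X)Y), where T(X,Y²) = (p'(X)Y² + Y²p'(X))/2. Moreover Z ≠ 0. -/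
/-!
Since `p` is even, `p(X) = p(x̂)·1` and `p'(X) = p'(x̂)·diag(1, -1)`, while `Y² = |z|²·1` with
`ℏ²(|z|² + p(x̂)) = 2x̂²`. For `X = diag(a, -a)` and an off-diagonal `Y` both double commutators are
explicit: `[[X,Y],Y] = 4a|z|²·diag(1, -1)` and `[[Y,X],X] = 4a²·Y`. The second identity is then
exactly the relation for `|z|²`, and the first one reduces to `2|z|² = x̂ p'(x̂)`, which is that
relation combined with the equation defining `x̂`. Finally `Z ≠ 0` because `x̂ ≠ 0` and `z ≠ 0`.
-/

section
variable {R : Type*} [CommRing R] (a q z w : R)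

theorem Matrix.commutator_diag_antidiag :
    !![a, 0; 0, -a] * !![0, z; w, 0] - !![0, z; w, 0] * !![a, 0; 0, -a]
      = (2 * a) • !![0, z; -w, 0] := by
  ext i j; fin_cases i <;> fin_cases j <;> simp <;> ring

theorem Matrix.commutator_commutator_antidiag :
    (!![a, 0; 0, -a] * !![0, z; w, 0] - !![0, z; w, 0] * !![a, 0; 0, -a]) * !![0, z; w, 0]
      - !![0, z; w, 0] * (!![a, 0; 0, -a] * !![0, z; w, 0] - !![0, z; w, 0] * !![a, 0; 0, -a])
      = (4 * a * (z * w)) • !![1, 0; 0, -1] := by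
  ext i j; fin_cases i <;> fin_cases j <;> simp <;> ring

theorem Matrix.commutator_commutator_diag :
    (!![0, z; w, 0] * !![a, 0; 0, -a] - !![a, 0; 0, -a] * !![0, z; w, 0]) * !![a, 0; 0, -a]
      - !![a, 0; 0, -a] * (!![0, z; w, 0] * !![a, 0; 0, -a] - !![a, 0; 0, -a] * !![0, z; w, 0])
      = (4 * a ^ 2) • !![0, z; w, 0] := by
  ext i j; fin_cases i <;> fin_cases j <;> simp <;> ring

theorem Matrix.two_smul_antidiag_pow_three_add_anticomm_scalar :
    2 • !![0, z; w, 0] ^ 3 + !![0, z; w, 0] * !![q, 0; 0, q] + !![q, 0; 0, q] * !![0, z; w, 0]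
      = (2 * (z * w + q)) • !![0, z; w, 0] := by
  ext i j; fin_cases i <;> fin_cases j <;> simp [pow_succ] <;> ring

end

section
variable {K : Type*} [Field K] [NeZero (2 : K)]

theorem Matrix.div_two_eq_inv_two_smul {n : Type*} [Fintype n] [DecidableEq n]
    (M : Matrix n n K) : M / 2 = (2 : K)⁻¹ • M := by
  have two_eq : (2 : Matrix n n K) = (2 : K) • 1 := by rw [two_smul, one_add_one_eq_two]
  have inv_two : (2 : Matrix n n K)⁻¹ = (2 : K)⁻¹ • 1 := by
    refine Matrix.inv_eq_right_inv ?_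
    rw [Matrix.mul_smul, mul_one, two_eq, smul_smul, inv_mul_cancel₀ two_ne_zero, one_smul]
  rw [div_eq_mul_inv, inv_two, Matrix.mul_smul, mul_one]

theorem Matrix.scalar_mul_diag_add_half_anticomm_antidiag_sq (q r z w : K) :
    !![q, 0; 0, q] * !![r, 0; 0, -r]
      + (!![r, 0; 0, -r] * !![0, z; w, 0] ^ 2 + !![0, z; w, 0] ^ 2 * !![r, 0; 0, -r]) / 2
      = (r * (q + z * w)) • !![1, 0; 0, -1] := by
  rw [Matrix.div_two_eq_inv_two_smul]
  have h2 : (2 : K) ≠ 0 := two_ne_zero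
  ext i j; fin_cases i <;> fin_cases j <;> simp [sq] <;> field_simp <;> ring

theorem Matrix.commutator_diag_antidiag_ne_zero {a z : K} (w : K) (ha : a ≠ 0) (hz : z ≠ 0) :
    !![a, 0; 0, -a] * !![0, z; w, 0] - !![0, z; w, 0] * !![a, 0; 0, -a] ≠ 0 := by
  rw [Matrix.commutator_diag_antidiag]
  intro h
  simpa [ha, hz, two_ne_zero] using congrFun (congrFun h 0) 1

end

theorem Function.Even.deriv_neg {f : ℝ → ℝ} (hf : Function.Even f) (x : ℝ) :
    deriv f (-x) = -deriv f x := by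
  have h := deriv_comp_neg f x
  rw [show (fun x => f (-x)) = f from funext hf] at h
  linarith

theorem Complex.sq_mul_mul_conj_of_eq_inv_mul_exp_mul_sqrt {ℏ D θ : ℝ} (hℏ : ℏ ≠ 0)
    (hD : 0 ≤ D) {z : ℂ} (hz : z = (1 / ℏ : ℝ) * exp (θ * I) * (√D : ℝ)) :
    (ℏ : ℂ) ^ 2 * (z * (starRingEnd ℂ) z) = D := by
  rw [hz, mul_conj', norm_mul, norm_mul, norm_exp_ofReal_mul_I, norm_real, norm_real, mul_one,
    Real.norm_eq_abs, Real.norm_eq_abs, ← abs_mul]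
  norm_cast
  rw [sq_abs, mul_pow, Real.sq_sqrt hD]
  field_simp

theorem stmt_11_general (g : ℕ) (α c ℏ : ℝ)
    (hℏ : 0 < ℏ)
    (p : ℝ → ℝ)
    (hp : ∀ x, p x = α * ∏ k ∈ Finset.Icc 1 g, (x^2 - (k : ℝ)^2) - Real.sqrt c)
    (xh : ℝ)
    (hx1 : 2 * p xh + xh * deriv p xh - 4 * xh^2 / ℏ^2 = 0)
    (hx2 : 2 * xh^2 - ℏ^2 * p xh > 0)
    (θ : ℝ) (z : ℂ)
    (hz : z = (1 / ℏ : ℝ) * Complex.exp (θ * Complex.I)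
            * (Real.sqrt (2 * xh^2 - ℏ^2 * p xh) : ℝ))
    (X Y Z pX p'X : Matrix (Fin 2) (Fin 2) ℂ)
    (hX : X = !![Complex.ofReal xh, 0; 0, Complex.ofReal (-xh)])
    (hY : Y = !![0, z; (starRingEnd ℂ) z, 0])
    (hZ : Z = (1 / (Complex.I * ℏ)) • (X * Y - Y * X))
    (hpX : pX = !![Complex.ofReal (p xh), 0; 0, Complex.ofReal (p (-xh))])
    (hp'X : p'X = !![Complex.ofReal (deriv p xh), 0; 0, Complex.ofReal (deriv p (-xh))]) :
    X * Y - Y * X = (Complex.I * ℏ) • Z ∧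
    (X * Y - Y * X) * Y - Y * (X * Y - Y * X)
      = ((ℏ : ℂ)^2) • (pX * p'X + (p'X * Y^2 + Y^2 * p'X) / 2) ∧
    (Y * X - X * Y) * X - X * (Y * X - X * Y)
      = ((ℏ : ℂ)^2) • (2 • (Y^3) + Y * pX + pX * Y) ∧
    Z ≠ 0 := by
  have hp_even : Function.Even p := fun x => by rw [hp, hp, neg_sq]
  simp only [hp_even xh, hp_even.deriv_neg, Complex.ofReal_neg] at hX hpX hp'X
  have hℏ0 : (ℏ : ℂ) ≠ 0 := Complex.ofReal_ne_zero.mpr hℏ.ne'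
  have hℏ_normSq := Complex.sq_mul_mul_conj_of_eq_inv_mul_exp_mul_sqrt hℏ.ne' hx2.le hz
  have hz0 : z ≠ 0 := by
    rintro rfl
    simp only [map_zero, mul_zero] at hℏ_normSq
    exact hx2.ne' (Complex.ofReal_eq_zero.mp hℏ_normSq.symm)
  push_cast at hℏ_normSq
  have hx1C : (ℏ : ℂ) ^ 2 * (2 * p xh + xh * ((deriv p xh : ℝ) : ℂ)) = 4 * xh ^ 2 := by
    field_simp at hx1
    exact_mod_cast (by linarith : ℏ ^ 2 * (2 * p xh + xh * deriv p xh) = 4 * xh ^ 2)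
  have h_two_normSq : 2 * (z * (starRingEnd ℂ) z) = xh * ((deriv p xh : ℝ) : ℂ) :=
    mul_left_cancel₀ (pow_ne_zero 2 hℏ0) (by linear_combination 2 * hℏ_normSq - hx1C)
  have hxh : xh ≠ 0 := by
    rintro rfl
    norm_num at hx1
    norm_num [hx1] at hx2
  subst hX hY hpX hp'X
  refine ⟨?_, ?_, ?_, ?_⟩
  · rw [hZ, smul_smul, mul_one_div_cancel (mul_ne_zero Complex.I_ne_zero hℏ0), one_smul]
  · rw [Matrix.commutator_commutator_antidiag,
      Matrix.scalar_mul_diag_add_half_anticomm_antidiag_sq, smul_smul]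
    congr 1
    linear_combination 2 * (xh : ℂ) * h_two_normSq - ((deriv p xh : ℝ) : ℂ) * hℏ_normSq
  · rw [Matrix.commutator_commutator_diag, Matrix.two_smul_antidiag_pow_three_add_anticomm_scalar,
      smul_smul]
    congr 1
    linear_combination -2 * hℏ_normSq
  · rw [hZ]
    exact smul_ne_zero (one_div_ne_zero (mul_ne_zero Complex.I_ne_zero hℏ0))
      (Matrix.commutator_diag_antidiag_ne_zero _ (Complex.ofReal_ne_zero.mpr hxh) hz0)

theorem stmt_11 (g : ℕ) (hg : 1 ≤ g) (α c ℏ : ℝ)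
    (hα : 0 < α) (hc : 0 < c) (hℏ : 0 < ℏ)
    (p : ℝ → ℝ)
    (hp : ∀ x, p x = α * ∏ k ∈ Finset.Icc 1 g, (x^2 - (k : ℝ)^2) - Real.sqrt c)
    (xh : ℝ)
    (hx1 : 2 * p xh + xh * deriv p xh - 4 * xh^2 / ℏ^2 = 0)
    (hx2 : 2 * xh^2 - ℏ^2 * p xh > 0)
    (θ : ℝ) (z : ℂ)
    (hz : z = (1 / ℏ : ℝ) * Complex.exp (θ * Complex.I)
            * (Real.sqrt (2 * xh^2 - ℏ^2 * p xh) : ℝ))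
    (X Y Z pX p'X : Matrix (Fin 2) (Fin 2) ℂ)
    (hX : X = !![Complex.ofReal xh, 0; 0, Complex.ofReal (-xh)])
    (hY : Y = !![0, z; (starRingEnd ℂ) z, 0])
    (hZ : Z = (1 / (Complex.I * ℏ)) • (X * Y - Y * X))
    (hpX : pX = !![Complex.ofReal (p xh), 0; 0, Complex.ofReal (p (-xh))])
    (hp'X : p'X = !![Complex.ofReal (deriv p xh), 0; 0, Complex.ofReal (deriv p (-xh))]) :
    X * Y - Y * X = (Complex.I * ℏ) • Z ∧
    (X * Y - Y * X) * Y - Y * (X * Y - Y * X)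
      = ((ℏ : ℂ)^2) • (pX * p'X + (p'X * Y^2 + Y^2 * p'X) / 2) ∧
    (Y * X - X * Y) * X - X * (Y * X - X * Y)
      = ((ℏ : ℂ)^2) • (2 • (Y^3) + Y * pX + pX * Y) ∧
    Z ≠ 0 :=
  stmt_11_general g α c ℏ hℏ p hp xh hx1 hx2 θ z hz X Y Z pX p'X hX hY hZ hpX hp'X
end

section
/- For every ℏ > 0 and integer g ≥ 2, there exists x̂ > g−1 such that 2p(x̂) + x̂p'(x̂) − 4x̂²/ℏ² = 0 and 2x̂²/ℏ² − p(x̂) > 0. -/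
/-!
Up to the factor `x`, `2 p x + x p' x - 4 x² / ℏ²` is the derivative of
`F x = x² p x - x⁴ / ℏ²`. Since `p (g - 1) = p g = -√c ≤ 0`, `F g` is negative and smaller than
`F (g - 1)`, while `F b > 0` as soon as `p b > b² / ℏ²`, which happens for large `b` because `p`
grows like `α x^(2g)`. So `F` has an interior minimum on `[g - 1, b]`; there `F' = 0`, and
`F x ≤ F g < 0` gives `p x < x² / ℏ²`.
-/

open Set

theorem exists_mem_Ioo_deriv_eq_zero_le_of_lt_of_lt {F : ℝ → ℝ} {a b m : ℝ}
    (hF : ContinuousOn F (Icc a b)) (hm : m ∈ Icc a b) (ha : F m < F a) (hb : F m < F b) :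
    ∃ x ∈ Ioo a b, deriv F x = 0 ∧ F x ≤ F m := by
  have hab : a ≤ b := hm.1.trans hm.2
  obtain ⟨x, hx, hmin⟩ := isCompact_Icc.exists_isMinOn_mem_subset hF hm <| by
    rw [Icc_sdiff_Ioo_same hab]
    rintro z (rfl | rfl)
    exacts [ha, hb]
  exact ⟨x, hx, (hmin.isLocalMin (Icc_mem_nhds hx.1 hx.2)).deriv_eq_zero, hmin hm⟩

theorem hasDerivAt_sq_mul_sub_pow_four_div {p : ℝ → ℝ} {p' x : ℝ} (hp : HasDerivAt p p' x)
    (d : ℝ) :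
    HasDerivAt (fun y => y ^ 2 * p y - y ^ 4 / d) (x * (2 * p x + x * p' - 4 * x ^ 2 / d)) x := by
  refine (((hasDerivAt_pow 2 x).mul hp).sub ((hasDerivAt_pow 4 x).div_const d)).congr_deriv ?_
  push_cast
  ring

theorem exists_gt_critical_point_sq_mul_sub_pow_four_div {p : ℝ → ℝ} (hp : Differentiable ℝ p)
    {a m b ℏ : ℝ} (ha : 0 < a) (ham : a < m) (hmb : m < b) (hℏ : ℏ ≠ 0) (hpa : p a = p m) (hpm : p m ≤ 0)
    (hpb : b ^ 2 / ℏ ^ 2 < p b) :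
    ∃ x, a < x ∧ 2 * p x + x * deriv p x - 4 * x ^ 2 / ℏ ^ 2 = 0 ∧ 2 * x ^ 2 / ℏ ^ 2 - p x > 0 := by
  set F : ℝ → ℝ := fun y => y ^ 2 * p y - y ^ 4 / ℏ ^ 2 with hF
  have hFd (y : ℝ) : HasDerivAt F (y * (2 * p y + y * deriv p y - 4 * y ^ 2 / ℏ ^ 2)) y :=
    hasDerivAt_sq_mul_sub_pow_four_div (hp y).hasDerivAt _
  have hFm : F m < 0 := by
    have : 0 < m ^ 4 / ℏ ^ 2 := by have : 0 < m := ha.trans ham; positivity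
    simp only [hF]; nlinarith [sq_nonneg m]
  have hFb : 0 < F b := by
    have hb : 0 < b ^ 2 := by nlinarith
    have : F b = b ^ 2 * (p b - b ^ 2 / ℏ ^ 2) := by simp only [hF]; ring
    rw [this]; exact mul_pos hb (by linarith)
  have hFa : F m < F a := by
    have hsq : a ^ 2 < m ^ 2 := by nlinarith
    have h4 : a ^ 4 / ℏ ^ 2 < m ^ 4 / ℏ ^ 2 := by gcongr
    simp only [hF, hpa]; nlinarith
  obtain ⟨x, ⟨hax, -⟩, hcrit, hFx⟩ := exists_mem_Ioo_deriv_eq_zero_le_of_lt_of_lt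
    (Differentiable.continuous fun y => (hFd y).differentiableAt).continuousOn
    ⟨ham.le, hmb.le⟩ hFa (hFm.trans hFb)
  have hx : 0 < x := ha.trans hax
  refine ⟨x, hax, ?_, ?_⟩
  · rw [(hFd x).deriv, mul_eq_zero] at hcrit
    exact hcrit.resolve_left hx.ne'
  · have hpx : x ^ 2 * p x < x ^ 2 * (x ^ 2 / ℏ ^ 2) := by
      have := hFx.trans_lt hFm
      simp only [hF] at this
      linarith [show x ^ 2 * (x ^ 2 / ℏ ^ 2) = x ^ 4 / ℏ ^ 2 by ring]
    have := lt_of_mul_lt_mul_left hpx (sq_nonneg x)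
    have : 0 < x ^ 2 / ℏ ^ 2 := by positivity
    linarith [show 2 * x ^ 2 / ℏ ^ 2 = 2 * (x ^ 2 / ℏ ^ 2) by ring]

theorem prod_Icc_sub_sq_eq_zero {g j : ℕ} (hj : j ∈ Finset.Icc 1 g) :
    ∏ k ∈ Finset.Icc 1 g, ((j : ℝ) ^ 2 - (k : ℝ) ^ 2) = 0 :=
  Finset.prod_eq_zero hj (sub_self _)

theorem pow_le_prod_Icc_sub_sq (g : ℕ) {s t : ℝ} (hs : 0 ≤ s) (ht : (g : ℝ) ^ 2 + s ≤ t) :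
    s ^ g ≤ ∏ k ∈ Finset.Icc 1 g, (t - (k : ℝ) ^ 2) := by
  calc s ^ g = ∏ _k ∈ Finset.Icc 1 g, s := by simp
    _ ≤ ∏ k ∈ Finset.Icc 1 g, (t - (k : ℝ) ^ 2) := by
      refine Finset.prod_le_prod (fun _ _ => hs) fun k hk => ?_
      have : (k : ℝ) ≤ g := by exact_mod_cast (Finset.mem_Icc.mp hk).2
      nlinarith [k.cast_nonneg (α := ℝ)]

theorem exists_one_le_add_mul_lt_mul_sq {α : ℝ} (hα : 0 < α) (A B : ℝ) :
    ∃ s, 1 ≤ s ∧ A + B * s < α * s ^ 2 := by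
  set s := 1 + (|A| + |B|) / α
  have hs : 1 ≤ s := le_add_of_nonneg_right (by positivity)
  have hαs : α * s = α + |A| + |B| := by simp only [s]; field_simp; ring
  refine ⟨s, hs, ?_⟩
  calc A + B * s ≤ |A| + |B| * s :=
        add_le_add (le_abs_self A) (mul_le_mul_of_nonneg_right (le_abs_self B) (by linarith))
    _ < α * s + |A| * s + |B| * s := by nlinarith [abs_nonneg A]
    _ = (α + |A| + |B|) * s := by ring
    _ = α * s ^ 2 := by rw [← hαs]; ring

theorem stmt_13_general (g : ℕ) (hg : 2 ≤ g) (α c ℏ : ℝ) (hℏ : 0 < ℏ)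
    (G : ℝ → ℝ) (hG : ∀ t, G t = ∏ k ∈ Finset.Icc 1 g, (t - (k : ℝ)^2))
    (hα : 0 < α)
    (p : ℝ → ℝ) (hp : ∀ x, p x = α * G (x^2) - Real.sqrt c) :
    ∃ xh : ℝ, xh > (g : ℝ) - 1 ∧
      2 * p xh + xh * deriv p xh - 4 * xh^2 / ℏ^2 = 0 ∧
      2 * xh^2 / ℏ^2 - p xh > 0 := by
  have hpd : Differentiable ℝ p := by
    rw [show p = fun x => α * ∏ k ∈ Finset.Icc 1 g, (x ^ 2 - (k : ℝ) ^ 2) - √c from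
      funext fun x => by rw [hp, hG]]
    fun_prop
  have hroot {j : ℕ} (hj : j ∈ Finset.Icc 1 g) : p j = -√c := by
    rw [hp, hG, prod_Icc_sub_sq_eq_zero hj]; ring
  have hg_mem : g ∈ Finset.Icc 1 g := Finset.mem_Icc.mpr ⟨by omega, le_rfl⟩
  have hg1_mem : g - 1 ∈ Finset.Icc 1 g := Finset.mem_Icc.mpr ⟨by omega, by omega⟩
  have hg1 : ((g - 1 : ℕ) : ℝ) = g - 1 := Nat.cast_pred (by omega)
  have hg2 : (2 : ℝ) ≤ g := by exact_mod_cast hg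
  obtain ⟨s, hs, hsα⟩ := exists_one_le_add_mul_lt_mul_sq hα (√c + g ^ 2 / ℏ ^ 2) (1 / ℏ ^ 2)
  set b := √((g : ℝ) ^ 2 + s)
  have hb2 : b ^ 2 = (g : ℝ) ^ 2 + s := Real.sq_sqrt (by positivity)
  have hgb : (g : ℝ) < b := by nlinarith [Real.sqrt_nonneg ((g : ℝ) ^ 2 + s)]
  have hpb : b ^ 2 / ℏ ^ 2 < p b := by
    have hGb : s ^ 2 ≤ G (b ^ 2) := by
      rw [hG]
      exact (pow_le_pow_right₀ hs hg).trans (pow_le_prod_Icc_sub_sq g (by linarith) hb2.ge)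
    have : α * s ^ 2 ≤ α * G (b ^ 2) := mul_le_mul_of_nonneg_left hGb hα.le
    rw [hp]
    linarith [show b ^ 2 / ℏ ^ 2 = g ^ 2 / ℏ ^ 2 + 1 / ℏ ^ 2 * s by rw [hb2]; ring]
  obtain ⟨x, hx, hcrit⟩ := exists_gt_critical_point_sq_mul_sub_pow_four_div hpd
    (a := ((g - 1 : ℕ) : ℝ)) (by rw [hg1]; linarith) (by rw [hg1]; linarith) hgb hℏ.ne'
    (by rw [hroot hg1_mem, hroot hg_mem])
    (by rw [hroot hg_mem]; exact neg_nonpos.mpr (by positivity)) hpb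
  exact ⟨x, hg1 ▸ hx, hcrit⟩

theorem stmt_13 (g : ℕ) (hg : 2 ≤ g) (α c ℏ : ℝ) (hc : 0 < c) (hℏ : 0 < ℏ)
    (G : ℝ → ℝ) (hG : ∀ t, G t = ∏ k ∈ Finset.Icc 1 g, (t - (k : ℝ)^2))
    (M : ℝ) (hM : IsGreatest (G '' Set.Icc (0 : ℝ) ((g : ℝ)^2 + 1)) M)
    (hα : 0 < α) (hαM : α < 2 * Real.sqrt c / M)
    (p : ℝ → ℝ) (hp : ∀ x, p x = α * G (x^2) - Real.sqrt c) :
    ∃ xh : ℝ, xh > (g : ℝ) - 1 ∧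
      2 * p xh + xh * deriv p xh - 4 * xh^2 / ℏ^2 = 0 ∧
      2 * xh^2 / ℏ^2 - p xh > 0 :=
  stmt_13_general g hg α c ℏ hℏ G hG hα p hp
end

section
/- Let x̂ ≠ 0 and suppose x̂² − ℏ²(p(0)+p(x̂)) > 0 and (2x̂/ℏ² − p'(x̂))(x̂²/ℏ² − p(0) − p(x̂)) = 4p(x̂)p'(x̂). Set r = (1/(2ℏ))√(x̂² − ℏ²(p(0)+p(x̂))), z₁ = e^{iθ₁}r, z₂ = e^{iθ₂}r. Then the 3×3 matrices X = diag(0, x̂, −x̂), Y with Y₀₁ = z₁, Y₀₂ = z₂, Y₁₀ = z̄₁, Y₂₀ = z̄₂ and all other entries zero, and Z = (1/(iℏ))[X,Y] satisfy the relations [[X,Y],Y] = ℏ²(p(X)p'(X) + (p'(X)Y² + Y²p'(X))/2) and [[Y,X],X] = ℏ²(2Y³ + Yp(X) + p(X)Y), and Z ≠ 0. -/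
/-!
Write `Y = !![0, z₁, z₂; w₁, 0, 0; w₂, 0, 0]` with `w₁ z₁ = w₂ z₂ = ρ` (here `w_k = z̄_k`,
`ρ = r²`). Commuting with the diagonal `X = diag(0, x, -x)` multiplies the entry `(i, j)` by
`X_i - X_j`, so `[[Y, X], X] = x² Y` and `[[X, Y], Y] = diag(0, 2xρ, -2xρ)`; moreover `Y³ = 2ρ Y`.
Since `p` is even, `p(X) = diag(p 0, p x, p x)` and `p'(X) = diag(0, p' x, -p' x)`, and both
relations collapse to the scalar identities `x² = ℏ²(4r² + p 0 + p x)` and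
`r²(2x - ℏ² p' x) = ℏ² p x p' x`, which are the definition of `r` and the hypothesis on `p' x`.
Finally `Z₀₁ = -x z₁ / (iℏ) ≠ 0`.
-/

open Matrix

theorem Function.Even.deriv_neg_s19 {𝕜 F : Type*} [NontriviallyNormedField 𝕜] [NormedAddCommGroup F]
    [NormedSpace 𝕜 F] {f : 𝕜 → F} (hf : f.Even) (x : 𝕜) : deriv f (-x) = -deriv f x := by
  have h := deriv_comp_neg (f := f) (x := -x)
  rwa [show (fun y => f (-y)) = f from funext hf, neg_neg] at h

theorem Complex.conj_mul_polar (θ r : ℝ) :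
    (starRingEnd ℂ) (Complex.exp (θ * Complex.I) * r) * (Complex.exp (θ * Complex.I) * r)
      = (r : ℂ) ^ 2 := by
  rw [Complex.conj_mul', norm_mul, Complex.norm_exp_ofReal_mul_I, one_mul, Complex.norm_real,
    Real.norm_eq_abs, ← Complex.ofReal_pow, sq_abs, Complex.ofReal_pow]

namespace Matrix

theorem div_two_eq_inv_two_smul_s19 {n K : Type*} [Fintype n] [DecidableEq n] [Field K]
    [NeZero (2 : K)] (M : Matrix n n K) : M / 2 = (2 : K)⁻¹ • M := by
  rw [div_eq_mul_inv, inv_eq_right_inv (B := (2 : K)⁻¹ • 1), mul_smul_comm, mul_one]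
  have htwo : (2 : Matrix n n K) = (2 : K) • 1 := by
    rw [ofNat_smul_eq_nsmul, nsmul_one, Nat.cast_ofNat]
  rw [htwo, smul_mul_smul, mul_one, mul_inv_cancel₀ two_ne_zero, one_smul]

variable {R : Type*} [CommRing R]

theorem diagonal_mul_sub_mul_diagonal_apply {n : Type*} [Fintype n] [DecidableEq n]
    (d : n → R) (M : Matrix n n R) (i j : n) :
    (diagonal d * M - M * diagonal d) i j = (d i - d j) * M i j := by
  simp only [sub_apply, diagonal_mul, mul_diagonal]
  ring

theorem diagonal_mul_add_mul_diagonal_apply {n : Type*} [Fintype n] [DecidableEq n]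
    (d : n → R) (M : Matrix n n R) (i j : n) :
    (diagonal d * M + M * diagonal d) i j = (d i + d j) * M i j := by
  simp only [add_apply, diagonal_mul, mul_diagonal]
  ring

def hollowArrowhead (z₁ z₂ w₁ w₂ : R) : Matrix (Fin 3) (Fin 3) R :=
  !![0, z₁, z₂; w₁, 0, 0; w₂, 0, 0]

section HollowArrowhead

variable (x a b d : R) {ρ z₁ z₂ w₁ w₂ : R}

theorem hollowArrowhead_sq :
    hollowArrowhead z₁ z₂ w₁ w₂ ^ 2
      = !![z₁ * w₁ + z₂ * w₂, 0, 0; 0, w₁ * z₁, w₁ * z₂; 0, w₂ * z₁, w₂ * z₂] := by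
  simp [sq, hollowArrowhead]

theorem diagonal_commutator_hollowArrowhead :
    diagonal ![0, x, -x] * hollowArrowhead z₁ z₂ w₁ w₂
        - hollowArrowhead z₁ z₂ w₁ w₂ * diagonal ![0, x, -x]
      = hollowArrowhead (-(x * z₁)) (x * z₂) (x * w₁) (-(x * w₂)) := by
  ext i j
  rw [diagonal_mul_sub_mul_diagonal_apply]
  fin_cases i <;> fin_cases j <;> simp [hollowArrowhead]

theorem hollowArrowhead_mul_diagonal_add_diagonal_mul :
    hollowArrowhead z₁ z₂ w₁ w₂ * diagonal ![a, b, b]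
        + diagonal ![a, b, b] * hollowArrowhead z₁ z₂ w₁ w₂
      = (a + b) • hollowArrowhead z₁ z₂ w₁ w₂ := by
  ext i j
  rw [add_comm, diagonal_mul_add_mul_diagonal_apply]
  fin_cases i <;> fin_cases j <;> simp [hollowArrowhead] <;> ring

theorem hollowArrowhead_pow_three (h₁ : w₁ * z₁ = ρ) (h₂ : w₂ * z₂ = ρ) :
    hollowArrowhead z₁ z₂ w₁ w₂ ^ 3 = (2 * ρ) • hollowArrowhead z₁ z₂ w₁ w₂ := by
  rw [pow_succ, hollowArrowhead_sq]
  ext i j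
  fin_cases i <;> fin_cases j <;> simp [hollowArrowhead] <;> grind

theorem commutator_commutator_hollowArrowhead (h₁ : w₁ * z₁ = ρ) (h₂ : w₂ * z₂ = ρ) :
    (diagonal ![0, x, -x] * hollowArrowhead z₁ z₂ w₁ w₂
        - hollowArrowhead z₁ z₂ w₁ w₂ * diagonal ![0, x, -x]) * hollowArrowhead z₁ z₂ w₁ w₂
      - hollowArrowhead z₁ z₂ w₁ w₂ * (diagonal ![0, x, -x] * hollowArrowhead z₁ z₂ w₁ w₂
        - hollowArrowhead z₁ z₂ w₁ w₂ * diagonal ![0, x, -x])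
      = diagonal ![0, 2 * x * ρ, -(2 * x * ρ)] := by
  rw [diagonal_commutator_hollowArrowhead]
  ext i j
  fin_cases i <;> fin_cases j <;> simp [hollowArrowhead] <;> grind

theorem diagonal_anticommutator_hollowArrowhead_sq (h₁ : w₁ * z₁ = ρ) (h₂ : w₂ * z₂ = ρ) :
    diagonal ![0, d, -d] * hollowArrowhead z₁ z₂ w₁ w₂ ^ 2
        + hollowArrowhead z₁ z₂ w₁ w₂ ^ 2 * diagonal ![0, d, -d]
      = diagonal ![0, 2 * (d * ρ), -(2 * (d * ρ))] := by
  ext i j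
  rw [diagonal_mul_add_mul_diagonal_apply, hollowArrowhead_sq]
  fin_cases i <;> fin_cases j <;> simp <;> grind

end HollowArrowhead

section Relations

variable {K : Type*} [Field K] {x a b d h ρ z₁ z₂ w₁ w₂ : K}

theorem hollowArrowhead_first_relation [NeZero (2 : K)] (h₁ : w₁ * z₁ = ρ) (h₂ : w₂ * z₂ = ρ)
    (hkey : ρ * (2 * x - h * d) = h * (b * d)) :
    (diagonal ![0, x, -x] * hollowArrowhead z₁ z₂ w₁ w₂
        - hollowArrowhead z₁ z₂ w₁ w₂ * diagonal ![0, x, -x]) * hollowArrowhead z₁ z₂ w₁ w₂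
      - hollowArrowhead z₁ z₂ w₁ w₂ * (diagonal ![0, x, -x] * hollowArrowhead z₁ z₂ w₁ w₂
        - hollowArrowhead z₁ z₂ w₁ w₂ * diagonal ![0, x, -x])
      = h • (diagonal ![a, b, b] * diagonal ![0, d, -d]
        + (diagonal ![0, d, -d] * hollowArrowhead z₁ z₂ w₁ w₂ ^ 2
          + hollowArrowhead z₁ z₂ w₁ w₂ ^ 2 * diagonal ![0, d, -d]) / 2) := by
  rw [commutator_commutator_hollowArrowhead x h₁ h₂,
    diagonal_anticommutator_hollowArrowhead_sq d h₁ h₂, div_two_eq_inv_two_smul_s19,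
    diagonal_mul_diagonal]
  have htwo : (2 : K) ≠ 0 := two_ne_zero
  ext i j
  fin_cases i <;> fin_cases j <;> simp <;> grind

theorem hollowArrowhead_second_relation (h₁ : w₁ * z₁ = ρ) (h₂ : w₂ * z₂ = ρ)
    (hkey : x ^ 2 = h * (4 * ρ + a + b)) :
    (hollowArrowhead z₁ z₂ w₁ w₂ * diagonal ![0, x, -x]
        - diagonal ![0, x, -x] * hollowArrowhead z₁ z₂ w₁ w₂) * diagonal ![0, x, -x]
      - diagonal ![0, x, -x] * (hollowArrowhead z₁ z₂ w₁ w₂ * diagonal ![0, x, -x]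
        - diagonal ![0, x, -x] * hollowArrowhead z₁ z₂ w₁ w₂)
      = h • (2 • hollowArrowhead z₁ z₂ w₁ w₂ ^ 3 + hollowArrowhead z₁ z₂ w₁ w₂ * diagonal ![a, b, b]
        + diagonal ![a, b, b] * hollowArrowhead z₁ z₂ w₁ w₂) := by
  have hswap : ∀ M N : Matrix (Fin 3) (Fin 3) K, (M * N - N * M) * N - N * (M * N - N * M)
      = N * (N * M - M * N) - (N * M - M * N) * N := fun M N => by noncomm_ring
  calc _ = x ^ 2 • hollowArrowhead z₁ z₂ w₁ w₂ := by
        rw [hswap, diagonal_commutator_hollowArrowhead, diagonal_commutator_hollowArrowhead]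
        ext i j
        fin_cases i <;> fin_cases j <;> simp [hollowArrowhead] <;> ring
    _ = _ := by
        rw [add_assoc (2 • _), hollowArrowhead_mul_diagonal_add_diagonal_mul,
          hollowArrowhead_pow_three h₁ h₂, hkey]
        module

end Relations

end Matrix

theorem radius_sq_relations {ℏ x p₀ p₁ d r : ℝ} (hℏ : ℏ ≠ 0)
    (hs : 0 ≤ x ^ 2 - ℏ ^ 2 * (p₀ + p₁))
    (hd : (2 * x / ℏ ^ 2 - d) * (x ^ 2 / ℏ ^ 2 - p₀ - p₁) = 4 * p₁ * d)
    (hr : r = 1 / (2 * ℏ) * √(x ^ 2 - ℏ ^ 2 * (p₀ + p₁))) :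
    x ^ 2 = ℏ ^ 2 * (4 * r ^ 2 + p₀ + p₁) ∧ r ^ 2 * (2 * x - ℏ ^ 2 * d) = ℏ ^ 2 * (p₁ * d) := by
  have hr₂ : 4 * ℏ ^ 2 * r ^ 2 = x ^ 2 - ℏ ^ 2 * (p₀ + p₁) := by
    rw [hr, mul_pow, Real.sq_sqrt hs]
    field_simp
    ring
  refine ⟨by linear_combination -hr₂, ?_⟩
  have hs' : x ^ 2 / ℏ ^ 2 - p₀ - p₁ = 4 * r ^ 2 := by
    field_simp
    linear_combination -hr₂
  rw [hs'] at hd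
  field_simp at hd
  linear_combination hd

theorem stmt_19_general (g : ℕ) (α c ℏ : ℝ)
    (hℏ : 0 < ℏ)
    (p : ℝ → ℝ)
    (hp : ∀ x, p x = α * ∏ k ∈ Finset.Icc 1 g, (x^2 - (k : ℝ)^2) - Real.sqrt c)
    (xh : ℝ) (hxh : xh ≠ 0)
    (h1 : xh^2 - ℏ^2 * (p 0 + p xh) > 0)
    (h2 : (2 * xh / ℏ^2 - deriv p xh) * (xh^2 / ℏ^2 - p 0 - p xh)
            = 4 * p xh * deriv p xh)
    (r : ℝ) (hr : r = (1 / (2 * ℏ)) * Real.sqrt (xh^2 - ℏ^2 * (p 0 + p xh)))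
    (θ₁ θ₂ : ℝ) (z₁ z₂ : ℂ)
    (hz₁ : z₁ = Complex.exp (θ₁ * Complex.I) * (r : ℂ))
    (hz₂ : z₂ = Complex.exp (θ₂ * Complex.I) * (r : ℂ))
    (X Y Z pX p'X : Matrix (Fin 3) (Fin 3) ℂ)
    (hX : X = Matrix.diagonal ![0, Complex.ofReal xh, Complex.ofReal (-xh)])
    (hY : Y = !![0, z₁, z₂;
                 (starRingEnd ℂ) z₁, 0, 0;
                 (starRingEnd ℂ) z₂, 0, 0])
    (hZ : Z = (1 / (Complex.I * ℏ)) • (X * Y - Y * X))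
    (hpX : pX = Matrix.diagonal
      ![Complex.ofReal (p 0), Complex.ofReal (p xh), Complex.ofReal (p (-xh))])
    (hp'X : p'X = Matrix.diagonal
      ![Complex.ofReal (deriv p 0), Complex.ofReal (deriv p xh),
        Complex.ofReal (deriv p (-xh))]) :
    (X * Y - Y * X) * Y - Y * (X * Y - Y * X)
      = ((ℏ : ℂ)^2) • (pX * p'X + (p'X * Y^2 + Y^2 * p'X) / 2) ∧
    (Y * X - X * Y) * X - X * (Y * X - X * Y)
      = ((ℏ : ℂ)^2) • (2 • (Y^3) + Y * pX + pX * Y) ∧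
    Z ≠ 0 := by
  have hpe : p.Even := fun x => by simp only [hp, neg_sq]
  have hd₀ : deriv p 0 = 0 := by linarith [neg_zero (G := ℝ) ▸ hpe.deriv_neg_s19 0]
  obtain ⟨key₂, key₁⟩ := radius_sq_relations hℏ.ne' h1.le h2 hr
  have hc₁ : (starRingEnd ℂ) z₁ * z₁ = (r : ℂ) ^ 2 := hz₁ ▸ Complex.conj_mul_polar θ₁ r
  have hc₂ : (starRingEnd ℂ) z₂ * z₂ = (r : ℂ) ^ 2 := hz₂ ▸ Complex.conj_mul_polar θ₂ r
  rw [Complex.ofReal_neg] at hX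
  rw [hpe] at hpX
  rw [hpe.deriv_neg_s19, hd₀, Complex.ofReal_neg, Complex.ofReal_zero] at hp'X
  change Y = hollowArrowhead _ _ _ _ at hY
  subst hX hY hpX hp'X
  refine ⟨hollowArrowhead_first_relation hc₁ hc₂ (by exact_mod_cast key₁),
    hollowArrowhead_second_relation hc₁ hc₂ (by exact_mod_cast key₂), ?_⟩
  have hz₁₀ : z₁ ≠ 0 := by
    have hr₀ : 0 < r := hr ▸ by have := Real.sqrt_pos.mpr h1; positivity
    rw [hz₁]
    exact mul_ne_zero (Complex.exp_ne_zero _) (Complex.ofReal_ne_zero.mpr hr₀.ne')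
  rw [hZ, diagonal_commutator_hollowArrowhead]
  intro hZ₀
  simpa [hollowArrowhead, hℏ.ne', hxh, hz₁₀] using congrFun (congrFun hZ₀ 0) 1

theorem stmt_19 (g : ℕ) (hg : 1 ≤ g) (α c ℏ : ℝ)
    (hα : 0 < α) (hc : 0 < c) (hℏ : 0 < ℏ)
    (p : ℝ → ℝ)
    (hp : ∀ x, p x = α * ∏ k ∈ Finset.Icc 1 g, (x^2 - (k : ℝ)^2) - Real.sqrt c)
    (xh : ℝ) (hxh : xh ≠ 0)
    (h1 : xh^2 - ℏ^2 * (p 0 + p xh) > 0)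
    (h2 : (2 * xh / ℏ^2 - deriv p xh) * (xh^2 / ℏ^2 - p 0 - p xh)
            = 4 * p xh * deriv p xh)
    (r : ℝ) (hr : r = (1 / (2 * ℏ)) * Real.sqrt (xh^2 - ℏ^2 * (p 0 + p xh)))
    (θ₁ θ₂ : ℝ) (z₁ z₂ : ℂ)
    (hz₁ : z₁ = Complex.exp (θ₁ * Complex.I) * (r : ℂ))
    (hz₂ : z₂ = Complex.exp (θ₂ * Complex.I) * (r : ℂ))
    (X Y Z pX p'X : Matrix (Fin 3) (Fin 3) ℂ)
    (hX : X = Matrix.diagonal ![0, Complex.ofReal xh, Complex.ofReal (-xh)])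
    (hY : Y = !![0, z₁, z₂;
                 (starRingEnd ℂ) z₁, 0, 0;
                 (starRingEnd ℂ) z₂, 0, 0])
    (hZ : Z = (1 / (Complex.I * ℏ)) • (X * Y - Y * X))
    (hpX : pX = Matrix.diagonal
      ![Complex.ofReal (p 0), Complex.ofReal (p xh), Complex.ofReal (p (-xh))])
    (hp'X : p'X = Matrix.diagonal
      ![Complex.ofReal (deriv p 0), Complex.ofReal (deriv p xh),
        Complex.ofReal (deriv p (-xh))]) :
    (X * Y - Y * X) * Y - Y * (X * Y - Y * X)
      = ((ℏ : ℂ)^2) • (pX * p'X + (p'X * Y^2 + Y^2 * p'X) / 2) ∧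
    (Y * X - X * Y) * X - X * (Y * X - X * Y)
      = ((ℏ : ℂ)^2) • (2 • (Y^3) + Y * pX + pX * Y) ∧
    Z ≠ 0 :=
  stmt_19_general g α c ℏ hℏ p hp xh hxh h1 h2 r hr θ₁ θ₂ z₁ z₂ hz₁ hz₂ X Y Z pX p'X hX hY hZ hpX
    hp'X
end
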